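/- Let T be a nonspecial ω₁-tree and let S ⊆ ω₁ be such that T↾S ∈ NS^T. Then ◊_T implies ◊(ω₁ ∖ S); in particular, if ◊_T holds then ω₁ ∖ S is stationary. -/

import Mathlib

open Set

/-- The first uncountable ordinal `ω₁`. -/
noncomputable def omega1 : Ordinal := Ordinal.omega 1

section TreeDefs

variable {T : Type*} [PartialOrder T]

/-- In a tree, the set of strict predecessors of any node is linearly ordered. -/
def PredsChain (T : Type*) [PartialOrder T] : Prop :=
  ∀ t : T, IsChain (· ≤ ·) {s : T | s < t}

/-- `ht` is *the* height function of the tree: it is strictly monotone on comparable pairs and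
the heights of the strict predecessors of `t` are exactly the ordinals below `ht t`; together
with `PredsChain` this says that the set `t↓` of strict predecessors of `t` is well-ordered
with order type `ht t`. -/
def IsHeightFun (ht : T → Ordinal) : Prop :=
  (∀ s t : T, s < t → ht s < ht t) ∧
  ∀ t : T, ∀ o : Ordinal, o < ht t → ∃ s : T, s < t ∧ ht s = o

/-- The tree has height `ω₁`: every node has height `< ω₁` and every countable ordinal is the
height of some node. -/
def HeightOmega1 (ht : T → Ordinal) : Prop :=
  (∀ t : T, ht t < omega1) ∧ ∀ o : Ordinal, o < omega1 → ∃ t : T, ht t = o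

/-- All levels of the tree are countable. -/
def CountableLevels (ht : T → Ordinal) : Prop :=
  ∀ o : Ordinal, {t : T | ht t = o}.Countable

/-- A tree of height `ω₁` is well-pruned if every node has successors in all later levels. -/
def WellPruned (ht : T → Ordinal) : Prop :=
  ∀ o o' : Ordinal, o < o' → o' < omega1 →
    ∀ s : T, ht s = o → ∃ t : T, s < t ∧ ht t = o'

/-- A special subset of a tree: a union of countably many antichains. -/
def IsSpecialSet (U : Set T) : Prop :=
  ∃ A : ℕ → Set T, (∀ n : ℕ, IsAntichain (· ≤ ·) (A n)) ∧ U ⊆ ⋃ n, A n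

/-- Membership in the ideal `NS^T`: there is a regressive map on `B` all of whose fibers
are special. -/
def InNS [OrderBot T] (B : Set T) : Prop :=
  ∃ f : T → T, (∀ t ∈ B, t ≠ ⊥ → f t < t) ∧
    ∀ t : T, IsSpecialSet {s : T | s ∈ B ∧ f s = t}

/-- The diamond principle `◊_T` for a tree `T`. -/
def DiamondTree (T : Type*) [PartialOrder T] [OrderBot T] : Prop :=
  ∃ D : T → Set T, (∀ t : T, D t ⊆ Set.Iio t) ∧
    ∀ X : Set T, ¬ InNS {t : T | X ∩ Set.Iio t = D t}

end TreeDefs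

/-- Club subsets of `ω₁`: closed and unbounded in `ω₁`. -/
def IsClubIn (C : Set Ordinal) : Prop :=
  C ⊆ Set.Iio omega1 ∧
  (∀ o : Ordinal, o < omega1 → ∃ b ∈ C, o < b) ∧
  ∀ o : Ordinal, o < omega1 → (C ∩ Set.Iio o).Nonempty →
    IsLUB (C ∩ Set.Iio o) o → o ∈ C

/-- Stationary subsets of `ω₁`: sets meeting every club. -/
def IsStationaryIn (S : Set Ordinal) : Prop :=
  ∀ C : Set Ordinal, IsClubIn C → (S ∩ C).Nonempty

/-- The diamond principle `◊(S)` for `S ⊆ ω₁`;  `◊` is `DiamondOn (Set.Iio omega1)`. -/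
def DiamondOn (S : Set Ordinal) : Prop :=
  ∃ D : Ordinal → Set Ordinal, (∀ o ∈ S, D o ⊆ Set.Iio o) ∧
    ∀ X : Set Ordinal, X ⊆ Set.Iio omega1 →
      IsStationaryIn {o ∈ S | X ∩ Set.Iio o = D o}

/-!
Enumerate every level `o` of `T` as `e o 0, e o 1, …`. For each `n`, the `◊_T`-guess at the node
`e o n` yields a guess at a subset of `o`: the `ξ < o` such that some node of that guess has height
`ω * ξ + n`. If none of these countably many sequences were a `◊(ω₁ \ S)`-sequence, there would be
counterexamples `X n` witnessed by clubs `C n`. Code all of them into the single set of nodes whose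
height is `ω * ξ + n` with `ξ ∈ X n`. For a club `C`, pressing each node `t` with `ht t ∉ C` down to
its predecessor at height `sup (C ∩ ht t)` has countable fibres, so such nodes form a set in `NS^T`.
Hence some node `t ∉ T ↾ S` at which the `◊_T`-sequence guesses the coded set correctly has its
height in all `C n` and closed under `ξ ↦ ω * ξ + n`. Writing `t = e (ht t) n`, the `n`-th sequence
guesses `X n` correctly at `ht t`, a contradiction.
-/

open Set Ordinal Cardinal

theorem countable_Iic_of_lt_omega1 {o : Ordinal} (h : o < omega1) : (Iic o).Countable := by
  rw [← Iio_insert, countable_insert, ← le_aleph0_iff_set_countable, Cardinal.mk_Iio_ordinal,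
    lift_le_aleph0, ← lt_aleph_one_iff, ← lt_omega_iff_card_lt]
  exact h

theorem aleph0_lt_cof_omega1 : ℵ₀ < omega1.cof := by
  rw [omega1, cof_omega_one]; exact aleph0_lt_aleph_one

theorem omega0_mul_lt_omega1 {o : Ordinal} (h : o < omega1) : ω * o < omega1 :=
  isPrincipal_mul_omega 1 omega0_lt_omega_one h

theorem cof_Iio_omega1_ne_aleph0 : Order.cof (Iio omega1) ≠ ℵ₀ := by
  rw [cof_Iio, omega1, lift_omega, Ordinal.lift_one, cof_omega_one]; exact aleph0_lt_aleph_one.ne'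

theorem isClubIn_iff {C : Set Ordinal} :
    IsClubIn C ↔ C ⊆ Iio omega1 ∧ IsClub ((↑) ⁻¹' C : Set (Iio omega1)) := by
  refine ⟨fun ⟨hC, hunb, hcl⟩ => ⟨hC, ⟨fun d hdC hd _ a ha => ?_, fun a => ?_⟩⟩,
    fun ⟨hC, hclub⟩ => ⟨hC, fun o ho => ?_, fun o ho hne hlub => ?_⟩⟩
  · by_cases had : a ∈ d
    · exact hdC had
    refine hcl a a.2 ?_ ⟨fun x hx => hx.2.le, fun b hb => ?_⟩
    · obtain ⟨x, hx⟩ := hd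
      exact ⟨x, hdC hx, lt_of_le_of_ne (ha.1 hx) (ne_of_mem_of_not_mem hx had)⟩
    · by_contra! hba
      refine hba.not_ge (?_ : a ≤ ⟨b, hba.trans a.2⟩)
      refine ha.2 fun x hx => hb ⟨hdC hx, ?_⟩
      exact lt_of_le_of_ne (ha.1 hx) (ne_of_mem_of_not_mem hx had)
  · obtain ⟨b, hbC, hab⟩ := hunb a a.2
    exact ⟨⟨b, hC hbC⟩, hbC, hab.le⟩
  · obtain ⟨b, hbC, hb⟩ := hclub.isCofinal ⟨Order.succ o, (isSuccLimit_omega 1).succ_lt ho⟩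
    exact ⟨b, hbC, Order.succ_le_iff.1 hb⟩
  · obtain ⟨x, hxC, hxo⟩ := hne
    refine hclub.isLUB_mem (t := (↑) ⁻¹' (C ∩ Iio o)) (x := ⟨o, ho⟩) (fun y hy => hy.1)
      ⟨⟨x, hC hxC⟩, hxC, hxo⟩ ⟨fun y hy => hy.2.le, fun b hb => ?_⟩
    exact hlub.2 fun y hy => hb (a := ⟨y, hC hy.1⟩) hy

theorem IsClubIn.inter {C C' : Set Ordinal} (hC : IsClubIn C) (hC' : IsClubIn C') :
    IsClubIn (C ∩ C') := by
  rw [isClubIn_iff] at *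
  exact ⟨inter_subset_left.trans hC.1, hC.2.inter cof_Iio_omega1_ne_aleph0 hC'.2⟩

theorem isClubIn_iInter {C : ℕ → Set Ordinal} (hC : ∀ n, IsClubIn (C n)) :
    IsClubIn (⋂ n, C n) := by
  simp only [isClubIn_iff, preimage_iInter] at *
  exact ⟨iInter_subset_of_subset 0 (hC 0).1,
    IsClub.iInter_of_countable cof_Iio_omega1_ne_aleph0 fun n => (hC n).2⟩

theorem isClubIn_omega0_mul_fixedPoints : IsClubIn {o | o < omega1 ∧ ω * o = o} := by
  have hnormal := isNormal_mul_right omega0_pos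
  refine ⟨fun o ho => ho.1, fun a ha => ?_, fun o ho hne hlub => ⟨ho, ?_⟩⟩
  · refine ⟨nfp (ω * ·) (Order.succ a), ⟨?_, nfp_fp hnormal _⟩, ?_⟩
    · exact nfp_lt_ord aleph0_lt_cof_omega1 (fun _ => omega0_mul_lt_omega1)
        ((isSuccLimit_omega 1).succ_lt ha)
    · exact (Order.lt_succ a).trans_le (le_nfp _ _)
  · have hclub := hnormal.isClub_fixedPoints (by rw [Order.cof_ordinal]; exact aleph0_lt_univ.ne')
    exact hclub.isLUB_mem (fun x hx => hx.1.2) hne hlub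

theorem sSup_inter_Iio_lt {C : Set Ordinal} (hC : IsClubIn C) {o : Ordinal} (ho : o < omega1)
    (hoC : o ∉ C) (ho0 : 0 < o) : sSup (C ∩ Iio o) < o := by
  refine (csSup_le' fun x hx => hx.2.le).lt_of_ne fun heq => ?_
  rcases (C ∩ Iio o).eq_empty_or_nonempty with hempty | hne
  · rw [hempty, csSup_empty] at heq
    exact ho0.ne heq
  · have hlub := isLUB_csSup hne ⟨o, fun x hx => hx.2.le⟩
    rw [heq] at hlub
    exact hoC (hC.2.2 o ho hne hlub)

section Special

variable {T : Type*} [PartialOrder T] {U V : Set T}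

theorem IsSpecialSet.mono (hV : IsSpecialSet V) (hUV : U ⊆ V) : IsSpecialSet U :=
  let ⟨A, hA, hVA⟩ := hV
  ⟨A, hA, hUV.trans hVA⟩

theorem IsSpecialSet.union (hU : IsSpecialSet U) (hV : IsSpecialSet V) :
    IsSpecialSet (U ∪ V) := by
  obtain ⟨A, hA, hUA⟩ := hU
  obtain ⟨B, hB, hVB⟩ := hV
  have hAB : ∀ s, IsAntichain (· ≤ ·) (Sum.elim A B s) := Sum.forall.2 ⟨hA, hB⟩
  let e := Equiv.natSumNatEquivNat
  refine ⟨fun n => Sum.elim A B (e.symm n), fun n => hAB _, union_subset ?_ ?_⟩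
  · refine hUA.trans (iUnion_subset fun i => subset_iUnion_of_subset (e (.inl i)) ?_)
    simp
  · refine hVB.trans (iUnion_subset fun i => subset_iUnion_of_subset (e (.inr i)) ?_)
    simp

theorem Set.Countable.isSpecialSet [Nonempty T] (hU : U.Countable) : IsSpecialSet U := by
  obtain ⟨f, hf⟩ := countable_iff_exists_subset_range.1 hU
  exact ⟨fun n => {f n}, fun _ => .singleton, by rwa [← iUnion_singleton_eq_range] at hf⟩

variable [OrderBot T] {A B : Set T}

theorem InNS.mono (hB : InNS B) (hAB : A ⊆ B) : InNS A :=
  let ⟨f, hreg, hfib⟩ := hB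
  ⟨f, fun t ht => hreg t (hAB ht), fun t => (hfib t).mono fun _ hs => ⟨hAB hs.1, hs.2⟩⟩

theorem InNS.union (hA : InNS A) (hB : InNS B) : InNS (A ∪ B) := by
  classical
  obtain ⟨f, hf, hfib⟩ := hA
  obtain ⟨g, hg, hgib⟩ := hB
  refine ⟨fun t => if t ∈ A then f t else g t, fun t ht hne => ?_, fun u => ?_⟩
  · by_cases htA : t ∈ A
    · simpa [htA] using hf t htA hne
    · simpa [htA] using hg t (ht.resolve_left htA) hne
  · refine ((hfib u).union (hgib u)).mono fun s ⟨hs, hsu⟩ => ?_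
    by_cases hsA : s ∈ A
    · exact .inl ⟨hsA, by simpa [hsA] using hsu⟩
    · exact .inr ⟨hs.resolve_left hsA, by simpa [hsA] using hsu⟩

theorem not_inNS_diff (hB : ¬ InNS B) (hA : InNS A) : ¬ InNS (B \ A) :=
  fun hBA => hB ((hBA.union hA).mono fun t ht => by by_cases htA : t ∈ A <;> simp [ht, htA])

end Special

section Tree

variable {T : Type*} {ht : T → Ordinal}

theorem countable_setOf_height_le (hlev : CountableLevels ht) {β : Ordinal} (hβ : β < omega1) :
    {t : T | ht t ≤ β}.Countable := by
  change (ht ⁻¹' Iic β).Countable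
  rw [← biUnion_preimage_singleton]
  exact (countable_Iic_of_lt_omega1 hβ).biUnion fun o _ => hlev o

variable [PartialOrder T] [OrderBot T]

noncomputable def predAtHeight (ht : T → Ordinal) (t : T) (o : Ordinal) : T :=
  Classical.epsilon fun s => s < t ∧ ht s = o

theorem predAtHeight_spec (hht : IsHeightFun ht) {t : T} {o : Ordinal} (ho : o < ht t) :
    predAtHeight ht t o < t ∧ ht (predAtHeight ht t o) = o :=
  Classical.epsilon_spec (hht.2 t o ho)

theorem IsHeightFun.pos_of_ne_bot (hht : IsHeightFun ht) {t : T} (ht0 : t ≠ ⊥) : 0 < ht t :=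
  zero_le.trans_lt (hht.1 ⊥ t (bot_lt_iff_ne_bot.2 ht0))

theorem inNS_setOf_height_notMem (hht : IsHeightFun ht) (hΩ : ∀ t, ht t < omega1)
    (hlev : CountableLevels ht) {C : Set Ordinal} (hC : IsClubIn C) :
    InNS {t : T | ht t ∉ C} := by
  refine ⟨fun t => predAtHeight ht t (sSup (C ∩ Iio (ht t))), fun t htC ht0 => ?_, fun s => ?_⟩
  · exact (predAtHeight_spec hht (sSup_inter_Iio_lt hC (hΩ t) htC (hht.pos_of_ne_bot ht0))).1
  obtain ⟨β, hβC, hsβ⟩ := hC.2.1 (ht s) (hΩ s)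
  refine ((countable_setOf_height_le hlev (hC.1 hβC)).insert ⊥).isSpecialSet.mono ?_
  rintro t ⟨htC, rfl⟩
  by_cases ht0 : t = ⊥
  · exact .inl ht0
  refine .inr (show ht t ≤ β from not_lt.1 fun hβt => hsβ.not_ge ?_)
  rw [(predAtHeight_spec hht (sSup_inter_Iio_lt hC (hΩ t) htC (hht.pos_of_ne_bot ht0))).2]
  exact le_csSup ⟨ht t, fun x hx => hx.2.le⟩ ⟨hβC, hβt⟩

theorem exists_height_mem_of_not_inNS (hht : IsHeightFun ht) (hΩ : ∀ t, ht t < omega1)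
    (hlev : CountableLevels ht) {B : Set T} (hB : ¬ InNS B) {C : Set Ordinal} (hC : IsClubIn C) :
    ∃ t ∈ B, ht t ∈ C := by
  by_contra! h
  exact hB ((inNS_setOf_height_notMem hht hΩ hlev hC).mono h)

end Tree

def pairCode (ξ : Ordinal) (n : ℕ) : Ordinal := ω * ξ + n

theorem pairCode_inj {ξ ξ' : Ordinal} {n n' : ℕ} :
    pairCode ξ n = pairCode ξ' n' ↔ ξ = ξ' ∧ n = n' := by
  refine ⟨fun h => ?_, fun ⟨rfl, rfl⟩ => rfl⟩
  have hξ : ξ = ξ' := by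
    simpa [pairCode, mul_add_div _ omega0_ne_zero, div_eq_zero_of_lt (natCast_lt_omega0 _)]
      using congrArg (· / ω) h
  subst hξ
  exact ⟨rfl, by exact_mod_cast add_left_cancel h⟩

theorem pairCode_lt {ξ o : Ordinal} (n : ℕ) (ho : ω * o = o) (hξ : ξ < o) :
    pairCode ξ n < o :=
  calc pairCode ξ n < ω * Order.succ ξ := by
        rw [mul_succ]; exact add_lt_add_right (natCast_lt_omega0 n) _
    _ ≤ ω * o := mul_le_mul_right (Order.succ_le_of_lt hξ) _
    _ = o := ho

def codedUnion (X : ℕ → Set Ordinal) : Set Ordinal := ⋃ n, (pairCode · n) '' X n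

theorem pairCode_mem_codedUnion {X : ℕ → Set Ordinal} {ξ : Ordinal} {n : ℕ} :
    pairCode ξ n ∈ codedUnion X ↔ ξ ∈ X n := by
  simp only [codedUnion, mem_iUnion, mem_image, pairCode_inj]
  constructor
  · rintro ⟨m, ξ', hξ', rfl, rfl⟩; exact hξ'
  · exact fun h => ⟨n, ξ, h, rfl, rfl⟩

theorem inter_Iio_height_eq_of_codedUnion {T : Type*} [PartialOrder T] {ht : T → Ordinal}
    (hht : IsHeightFun ht) (X : ℕ → Set Ordinal) (n : ℕ) {t : T} (hfix : ω * ht t = ht t) :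
    X n ∩ Iio (ht t) =
      {ξ | ξ < ht t ∧ ∃ s ∈ {s | ht s ∈ codedUnion X} ∩ Iio t, ht s = pairCode ξ n} := by
  ext ξ
  constructor
  · rintro ⟨hξX, hξt⟩
    obtain ⟨s, hst, hs⟩ := hht.2 t _ (pairCode_lt n hfix hξt)
    exact ⟨hξt, s, ⟨by rwa [mem_ofPred_eq, hs, pairCode_mem_codedUnion], hst⟩, hs⟩
  · rintro ⟨hξt, s, ⟨hsX, -⟩, hs⟩
    rw [mem_ofPred_eq, hs, pairCode_mem_codedUnion] at hsX
    exact ⟨hsX, hξt⟩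

theorem DiamondOn.isStationaryIn {S : Set Ordinal} (h : DiamondOn S) : IsStationaryIn S := by
  obtain ⟨D, -, hD⟩ := h
  exact fun C hC => (hD ∅ (empty_subset _) C hC).mono (inter_subset_inter_left _ (sep_subset _ _))

theorem diamondOn_diff_of_diamondTree {T : Type*} [PartialOrder T] [OrderBot T]
    {ht : T → Ordinal} (hht : IsHeightFun ht) (hΩ : ∀ t, ht t < omega1)
    (hlev : CountableLevels ht) {S : Set Ordinal} (hTS : InNS {t : T | ht t ∈ S})
    (hd : DiamondTree T) : DiamondOn (Iio omega1 \ S) := by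
  obtain ⟨D, -, hD⟩ := hd
  choose e he using fun o => countable_iff_exists_subset_range.1 (hlev o)
  let guess (n : ℕ) (o : Ordinal) : Set Ordinal :=
    {ξ | ξ < o ∧ ∃ s ∈ D (e o n), ht s = pairCode ξ n}
  suffices ∃ n, ∀ X ⊆ Iio omega1, IsStationaryIn {o ∈ Iio omega1 \ S | X ∩ Iio o = guess n o} by
    obtain ⟨n, hn⟩ := this
    exact ⟨guess n, fun o _ ξ hξ => hξ.1, hn⟩
  by_contra! h
  simp only [IsStationaryIn, not_forall, not_nonempty_iff_eq_empty] at h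
  choose X _ C hC hXC using h
  obtain ⟨t, ⟨hDt, htS⟩, htE, htC⟩ :=
    exists_height_mem_of_not_inNS hht hΩ hlev (not_inNS_diff (hD {s | ht s ∈ codedUnion X}) hTS)
      (isClubIn_omega0_mul_fixedPoints.inter (isClubIn_iInter hC))
  obtain ⟨n, hn⟩ := he (ht t) rfl
  have hguess : X n ∩ Iio (ht t) = guess n (ht t) := by
    rw [inter_Iio_height_eq_of_codedUnion hht X n htE.2, show _ = D t from hDt]
    simp only [guess, hn]
  exact (hXC n).subset ⟨⟨⟨hΩ t, htS⟩, hguess⟩, mem_iInter.1 htC n⟩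

theorem stmt2_general {T : Type*} [PartialOrder T] [OrderBot T]
    (ht : T → Ordinal)
    (hht : IsHeightFun ht) (hΩ : HeightOmega1 ht) (hlev : CountableLevels ht)
    (S : Set Ordinal)
    (hTS : InNS {t : T | ht t ∈ S})
    (hd : DiamondTree T) :
    DiamondOn (Set.Iio omega1 \ S) ∧ IsStationaryIn (Set.Iio omega1 \ S) := by
  have hdiamond := diamondOn_diff_of_diamondTree hht hΩ.1 hlev hTS hd
  exact ⟨hdiamond, hdiamond.isStationaryIn⟩

/-- If `T` is a nonspecial `ω₁`-tree and `S ⊆ ω₁` is such that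
`T ↾ S ∈ NS^T`, then `◊_T` implies `◊(ω₁ \ S)`; in particular, if `◊_T` holds then
`ω₁ \ S` is stationary. -/
theorem stmt2 {T : Type*} [PartialOrder T] [OrderBot T]
    (hchain : PredsChain T) (ht : T → Ordinal)
    (hht : IsHeightFun ht) (hΩ : HeightOmega1 ht) (hlev : CountableLevels ht)
    (hns : ¬ IsSpecialSet (Set.univ : Set T))
    (S : Set Ordinal) (hSsub : S ⊆ Set.Iio omega1)
    (hTS : InNS {t : T | ht t ∈ S})
    (hd : DiamondTree T) :
    DiamondOn (Set.Iio omega1 \ S) ∧ IsStationaryIn (Set.Iio omega1 \ S) :=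
  stmt2_general ht hht hΩ hlev S hTS hd
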